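/- Fix σ, σ' > 0, ε > 0 and t ∈ (0,1), and let ρ* = (√(σ²σ'² + ε²/4) - ε/2)/(σσ'). Then the one-point discrete-IMF correlation update keeps ρ on the same side of ρ*: for every ρ ∈ (-1,1), if ρ > ρ* then ρ_new(ρ) > ρ*, and if ρ ≤ ρ* then ρ_new(ρ) ≤ ρ*. -/
import Mathlib


/-- One-point discrete-IMF correlation update
`ρ_new(ρ) = ((1-t)σ + tρσ')(tσ' + (1-t)ρσ) / ((1-t)²σ² + 2t(1-t)ρσσ' + t²σ'² + t(1-t)ε)`. -/
noncomputable def rhoNew (σ σ' ε t ρ : ℝ) : ℝ :=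
  (((1 - t) * σ + t * ρ * σ') * (t * σ' + (1 - t) * ρ * σ)) /
    ((1 - t) ^ 2 * σ ^ 2 + 2 * t * (1 - t) * ρ * σ * σ' + t ^ 2 * σ' ^ 2 + t * (1 - t) * ε)

/-- For `σ, σ' > 0`, `ε > 0`, `t ∈ (0,1)` and
`ρ* = (√(σ²σ'² + ε²/4) - ε/2)/(σσ')`, the one-point discrete-IMF update keeps `ρ` on the
same side of `ρ*`: if `ρ > ρ*` then `ρ_new(ρ) > ρ*`, and if `ρ ≤ ρ*` then `ρ_new(ρ) ≤ ρ*`. -/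
theorem rhoNew_same_side (σ σ' ε t ρstar : ℝ)
    (hσ : 0 < σ) (hσ' : 0 < σ') (hε : 0 < ε) (ht : t ∈ Set.Ioo (0 : ℝ) 1)
    (hρstar : ρstar = (Real.sqrt (σ ^ 2 * σ' ^ 2 + ε ^ 2 / 4) - ε / 2) / (σ * σ')) :
    ∀ ρ ∈ Set.Ioo (-1 : ℝ) 1,
      (ρstar < ρ → ρstar < rhoNew σ σ' ε t ρ) ∧
      (ρ ≤ ρstar → rhoNew σ σ' ε t ρ ≤ ρstar) := by
  obtain ⟨ht0, ht1⟩ := ht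
  intro ρ hρ
  obtain ⟨hρ1, hρ2⟩ := hρ
  have hs : 0 < σ * σ' := mul_pos hσ hσ'
  have hrad : (0:ℝ) ≤ σ ^ 2 * σ' ^ 2 + ε ^ 2 / 4 := by positivity
  have hsq : Real.sqrt (σ ^ 2 * σ' ^ 2 + ε ^ 2 / 4) ^ 2 = σ ^ 2 * σ' ^ 2 + ε ^ 2 / 4 :=
    Real.sq_sqrt hrad
  -- the quadratic equation satisfied by ρ*
  have hr : ρstar * (σ * σ') = Real.sqrt (σ ^ 2 * σ' ^ 2 + ε ^ 2 / 4) - ε / 2 := by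
    rw [hρstar, div_mul_cancel₀ _ hs.ne']
  have hq : σ * σ' * ρstar ^ 2 + ε * ρstar - σ * σ' = 0 := by
    have hq' : (σ * σ') * (σ * σ' * ρstar ^ 2 + ε * ρstar - σ * σ') = 0 := by
      linear_combination (σ * σ' * ρstar + Real.sqrt (σ ^ 2 * σ' ^ 2 + ε ^ 2 / 4) + ε / 2) * hr + hsq
    rcases mul_eq_zero.mp hq' with h | h
    · exact absurd h hs.ne'
    · exact h
  -- ρ* < 1
  have hρs1 : ρstar < 1 := by
    rw [hρstar, div_lt_one hs]
    have : Real.sqrt (σ ^ 2 * σ' ^ 2 + ε ^ 2 / 4) < σ * σ' + ε / 2 := by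
      rw [show σ ^ 2 * σ' ^ 2 + ε ^ 2 / 4 = (σ*σ')^2 + ε^2/4 by ring]
      have h2 : (σ*σ')^2 + ε^2/4 < (σ * σ' + ε / 2)^2 := by nlinarith
      calc Real.sqrt ((σ*σ')^2 + ε^2/4) < Real.sqrt ((σ * σ' + ε / 2)^2) :=
            Real.sqrt_lt_sqrt (by positivity) h2
        _ = σ * σ' + ε / 2 := Real.sqrt_sq (by positivity)
    linarith
  -- denominator positive
  set D : ℝ := (1 - t) ^ 2 * σ ^ 2 + 2 * t * (1 - t) * ρ * σ * σ' + t ^ 2 * σ' ^ 2 + t * (1 - t) * ε with hD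
  have hDpos : 0 < D := by
    have h1 : 0 < t * (1 - t) * ε := by
      have : 0 < 1 - t := by linarith
      positivity
    nlinarith [sq_nonneg ((1-t)*σ - t*σ'), sq_nonneg ((1-t)*σ + t*σ'),
      mul_pos (mul_pos ht0 (show (0:ℝ) < 1 - t by linarith)) hs]
  set N : ℝ := ((1 - t) * σ + t * ρ * σ') * (t * σ' + (1 - t) * ρ * σ) with hN
  -- key identity
  have key : N - ρstar * D =
      (ρ - ρstar) * ((1-t)*σ*(t*σ') * (ρ - ρstar) + ((1-t)*σ)^2 + (t*σ')^2) := by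
    rw [hN, hD]
    linear_combination (-(t*(1-t))) * hq
  -- factor positivity
  have hab : 0 < (1-t)*σ*(t*σ') := by
    have : 0 < 1 - t := by linarith
    positivity
  have hF : 0 < (1-t)*σ*(t*σ') * (ρ - ρstar) + ((1-t)*σ)^2 + (t*σ')^2 := by
    have hdiff : -2 < ρ - ρstar := by linarith
    nlinarith [sq_nonneg ((1-t)*σ - t*σ')]
  constructor
  · intro h
    rw [rhoNew, ← hN, ← hD, lt_div_iff₀ hDpos]
    have := mul_pos (show (0:ℝ) < ρ - ρstar by linarith) hF
    linarith [key]
  · intro h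
    rw [rhoNew, ← hN, ← hD, div_le_iff₀ hDpos]
    have := mul_nonpos_of_nonpos_of_nonneg (show ρ - ρstar ≤ 0 by linarith) hF.le
    linarith [key]
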